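/- Let γ be the unique solution of the trader Riccati terminal-value problem, Γ_{s,t} := exp(∫_s^t (γ(r) − 2a)/(2η) dr), κ := max(a, √(ηφ)), and define the kernels A(r,s,t) := ((γ(t) − 2a)/(4η²))·Γ_{r,s}·Γ_{s,t} and B(s,t) := Γ_{s,t}/(2η). Then for all E ∈ C([0,T]²) and F ∈ C([0,T]), the pair L̂[E,F] = (L̂₁[E,F], L̂₂[E,F]) satisfies sup_{(s,t)∈[0,T]²} |L̂₁[E,F](s,t)| ≤ exp(2κT/η)·( (κT²/(2η²) + T/(2η))·‖E‖_∞ + (κT/(2η²))·‖F‖_∞ ) and sup_{t∈[0,T]} |L̂₂[E,F](t)| ≤ exp(2κT/η)·( (T²/(4η))·‖E‖_∞ + (T/(2η))·‖F‖_∞ ), where ‖·‖_∞ denotes the supremum norm. -/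

import Mathlib

open Set

/-- The trader Riccati terminal-value problem. -/
def IsTraderRiccatiSol (a η φ T : ℝ) (γ : ℝ → ℝ) : Prop :=
  ContDiffOn ℝ 1 γ (Icc 0 T) ∧ γ T = 0 ∧
    ∀ t ∈ Icc (0 : ℝ) T,
      HasDerivWithinAt γ ((φ - a ^ 2 / η) + (2 * a / η) * γ t - (1 / (2 * η)) * (γ t) ^ 2)
        (Icc 0 T) t

/-- `Γ_{s,t} = exp(∫_s^t (γ(r) − 2a)/(2η) dr)`, with the signed-integral convention. -/
noncomputable def Gam (a η : ℝ) (γ : ℝ → ℝ) (s t : ℝ) : ℝ :=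
  Real.exp (∫ r in s..t, (γ r - 2 * a) / (2 * η))

/-- The kernel `A(r,s,t) = ((γ(t) − 2a)/(4η²))·Γ_{r,s}·Γ_{s,t}`. -/
noncomputable def kerA (a η : ℝ) (γ : ℝ → ℝ) (r s t : ℝ) : ℝ :=
  ((γ t - 2 * a) / (4 * η ^ 2)) * Gam a η γ r s * Gam a η γ s t

/-- The kernel `B(s,t) = Γ_{s,t}/(2η)`. -/
noncomputable def kerB (a η : ℝ) (γ : ℝ → ℝ) (s t : ℝ) : ℝ :=
  Gam a η γ s t / (2 * η)

/-- First component of the operator `L̂` associated with kernels `A`, `B` and horizon `T`. -/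
noncomputable def Lhat1 (A : ℝ → ℝ → ℝ → ℝ) (B : ℝ → ℝ → ℝ) (T : ℝ)
    (E : ℝ → ℝ → ℝ) (F : ℝ → ℝ) (s t : ℝ) : ℝ :=
  (∫ u in s..t, ∫ r in u..T, A r u t * E s r) +
    (∫ r in s..T, A r s t * ((∫ u in s..r, E u r) + F r)) +
    ∫ u in t..T, B u t * E s u

/-- Second component of the operator `L̂` associated with kernels `A`, `B` and horizon `T`. -/
noncomputable def Lhat2 (B : ℝ → ℝ → ℝ) (T : ℝ)
    (E : ℝ → ℝ → ℝ) (F : ℝ → ℝ) (t : ℝ) : ℝ :=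
  ∫ s in t..T, B s t * ((∫ u in t..s, E u s) + F s)

lemma riccati_root_rigid (a η φ T : ℝ) (hη : 0 < η)
    (γ : ℝ → ℝ) (hγ : IsTraderRiccatiSol a η φ T γ)
    (ρ : ℝ) (hρ : (φ - a ^ 2 / η) + (2 * a / η) * ρ - (1 / (2 * η)) * ρ ^ 2 = 0)
    (t₁ : ℝ) (ht₁ : t₁ ∈ Icc (0:ℝ) T) (h1 : γ t₁ = ρ) :
    ∀ t ∈ Icc (0:ℝ) T, γ t = ρ := by
  have hcont : ContinuousOn γ (Icc 0 T) := hγ.1.continuousOn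
  have hcpt : IsCompact (Icc (0:ℝ) T) := isCompact_Icc
  obtain ⟨C₀, hC₀⟩ := hcpt.exists_bound_of_continuousOn hcont
  set C : ℝ := max C₀ |ρ| with hC
  have hCγ : ∀ t ∈ Icc (0:ℝ) T, γ t ∈ Icc (-C) C := by
    intro t ht
    have := hC₀ t ht
    simp only [Real.norm_eq_abs] at this
    have h1 : |γ t| ≤ C := le_trans this (le_max_left _ _)
    exact abs_le.mp h1
  have hCρ : ρ ∈ Icc (-C) C := abs_le.mp (le_max_right C₀ |ρ|)
  have hCnn : 0 ≤ C := le_trans (abs_nonneg ρ) (le_max_right _ _)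
  set v : ℝ → ℝ → ℝ := fun _ x => (φ - a ^ 2 / η) + (2 * a / η) * x - (1 / (2 * η)) * x ^ 2 with hv
  set K : NNReal := Real.toNNReal ((2 * |a| + C) / η) with hK
  have hlip : ∀ t : ℝ, LipschitzOnWith K (v t) (Icc (-C) C) := by
    intro t
    rw [lipschitzOnWith_iff_dist_le_mul]
    intro x hx y hy
    have hxy : v t x - v t y = (x - y) * (2 * a / η - (x + y) / (2 * η)) := by
      simp only [hv]
      ring
    rw [Real.dist_eq, Real.dist_eq, hxy, abs_mul]
    have hKc : ((K : ℝ)) = max ((2 * |a| + C) / η) 0 := by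
      rw [hK, Real.coe_toNNReal']
    have hb : |2 * a / η - (x + y) / (2 * η)| ≤ (2 * |a| + C) / η := by
      have h1 : |x| ≤ C := abs_le.mpr hx
      have h2 : |y| ≤ C := abs_le.mpr hy
      have : |2 * a / η - (x + y) / (2 * η)| ≤ |2 * a / η| + |(x + y) / (2 * η)| :=
        abs_sub _ _
      rw [abs_div, abs_div] at this
      have hxy2 : |x + y| ≤ 2 * C := by
        calc |x + y| ≤ |x| + |y| := abs_add_le _ _
          _ ≤ 2 * C := by linarith
      have hη' : |η| = η := abs_of_pos hη
      have h2η : |2 * η| = 2 * η := abs_of_pos (by linarith)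
      rw [hη', h2η] at this
      have hA : |2 * a| / η ≤ 2 * |a| / η := by
        rw [abs_mul]
        simp [abs_of_nonneg]
      have hB : |x + y| / (2 * η) ≤ C / η := by
        rw [div_le_div_iff₀ (by linarith) hη]
        nlinarith
      calc |2 * a / η - (x + y) / (2 * η)| ≤ |2 * a| / η + |x + y| / (2 * η) := this
        _ ≤ 2 * |a| / η + C / η := by linarith
        _ = (2 * |a| + C) / η := by ring
    have hKge : (2 * |a| + C) / η ≤ (K : ℝ) := by
      rw [hKc]; exact le_max_left _ _
    calc |x - y| * |2 * a / η - (x + y) / (2 * η)|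
        ≤ |x - y| * ((2 * |a| + C) / η) := by
          exact mul_le_mul_of_nonneg_left hb (abs_nonneg _)
      _ ≤ |x - y| * (K : ℝ) := mul_le_mul_of_nonneg_left hKge (abs_nonneg _)
      _ = (K : ℝ) * |x - y| := mul_comm _ _
  have hderiv : ∀ t ∈ Icc (0:ℝ) T, HasDerivWithinAt γ (v t (γ t)) (Icc 0 T) t := hγ.2.2
  -- right part
  have hright : ∀ t ∈ Icc t₁ T, γ t = ρ := by
    have := ODE_solution_unique_of_mem_Icc_right (v := v) (s := fun _ => Icc (-C) C)
      (K := K) (f := γ) (g := fun _ => ρ) (a := t₁) (b := T) (fun t _ => hlip t)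
      (hcont.mono (Icc_subset_Icc ht₁.1 le_rfl))
      (fun t ht => by
        have htIcc : t ∈ Icc (0:ℝ) T := ⟨le_trans ht₁.1 ht.1, le_of_lt ht.2⟩
        exact (hderiv t htIcc).mono_of_mem_nhdsWithin
          (Icc_mem_nhdsGE_of_mem ⟨htIcc.1, ht.2⟩))
      (fun t ht => hCγ t ⟨le_trans ht₁.1 ht.1, le_of_lt ht.2⟩)
      continuousOn_const
      (fun t ht => by
        convert hasDerivWithinAt_const t (Ici t) ρ using 1)
      (fun t _ => hCρ) h1
    exact fun t ht => this ht
  -- left part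
  have hleft : ∀ t ∈ Icc (0:ℝ) t₁, γ t = ρ := by
    have := ODE_solution_unique_of_mem_Icc_left (v := v) (s := fun _ => Icc (-C) C)
      (K := K) (f := γ) (g := fun _ => ρ) (a := (0:ℝ)) (b := t₁) (fun t _ => hlip t)
      (hcont.mono (Icc_subset_Icc le_rfl ht₁.2))
      (fun t ht => by
        have htIcc : t ∈ Icc (0:ℝ) T := ⟨le_of_lt ht.1, le_trans ht.2 ht₁.2⟩
        exact (hderiv t htIcc).mono_of_mem_nhdsWithin
          (Icc_mem_nhdsLE_of_mem ⟨ht.1, htIcc.2⟩))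
      (fun t ht => hCγ t ⟨le_of_lt ht.1, le_trans ht.2 ht₁.2⟩)
      continuousOn_const
      (fun t ht => by
        convert hasDerivWithinAt_const t (Iic t) ρ using 1)
      (fun t _ => hCρ) h1
    exact fun t ht => this ht
  intro t ht
  rcases le_total t t₁ with h | h
  · exact hleft t ⟨ht.1, h⟩
  · exact hright t ⟨h, ht.2⟩


lemma gamma_abs_bound {a η φ T : ℝ} {γ : ℝ → ℝ}
    (ha : 0 < a) (hη : 0 < η) (hφ : 0 < φ) (hT : 0 < T)
    (hγ : IsTraderRiccatiSol a η φ T γ) :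
    ∀ t ∈ Icc (0:ℝ) T, |γ t - 2 * a| ≤ 2 * max a (Real.sqrt (η * φ)) := by
  have hcont : ContinuousOn γ (Icc 0 T) := hγ.1.continuousOn
  set κ : ℝ := max a (Real.sqrt (η * φ)) with hκ
  have hκa : a ≤ κ := le_max_left _ _
  have hκpos : 0 < κ := lt_of_lt_of_le ha hκa
  have hηφ : (0:ℝ) ≤ η * φ := by positivity
  have hηφκ : η * φ ≤ κ ^ 2 := by
    have h1 : Real.sqrt (η * φ) ≤ κ := le_max_right _ _
    nlinarith [Real.sq_sqrt hηφ, Real.sqrt_nonneg (η * φ)]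
  set δ : ℝ := Real.sqrt (2 * a ^ 2 + 2 * η * φ) with hδ
  have hδ2 : δ ^ 2 = 2 * a ^ 2 + 2 * η * φ := Real.sq_sqrt (by positivity)
  have hδpos : 0 < δ := Real.sqrt_pos.mpr (by positivity)
  have hδκ : δ ≤ 2 * κ := by
    nlinarith [hδ2, hδpos]
  have hrootp : (φ - a ^ 2 / η) + (2 * a / η) * (2 * a + δ) - (1 / (2 * η)) * (2 * a + δ) ^ 2 = 0 := by
    field_simp
    nlinarith [hδ2]
  have hrootm : (φ - a ^ 2 / η) + (2 * a / η) * (2 * a - δ) - (1 / (2 * η)) * (2 * a - δ) ^ 2 = 0 := by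
    field_simp
    nlinarith [hδ2]
  have hT0 : γ T = 0 := hγ.2.1
  have hTmem : T ∈ Icc (0:ℝ) T := ⟨le_of_lt hT, le_rfl⟩
  -- upper bound
  have hub : ∀ t ∈ Icc (0:ℝ) T, γ t ≤ 2 * a + δ := by
    intro t ht
    by_contra hcon
    push_neg at hcon
    have htT : t ≤ T := ht.2
    obtain ⟨t₁, ht₁, hval⟩ : ∃ t₁ ∈ Icc t T, γ t₁ = 2 * a + δ := by
      have hsub : Icc (γ T) (γ t) ⊆ γ '' Icc t T :=
        intermediate_value_Icc' htT (hcont.mono (Icc_subset_Icc ht.1 le_rfl))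
      have hmem : (2 * a + δ) ∈ Icc (γ T) (γ t) := ⟨by rw [hT0]; positivity, le_of_lt hcon⟩
      obtain ⟨t₁, ht₁, heq⟩ := hsub hmem
      exact ⟨t₁, ht₁, heq⟩
    have ht₁' : t₁ ∈ Icc (0:ℝ) T := ⟨le_trans ht.1 ht₁.1, ht₁.2⟩
    have := riccati_root_rigid a η φ T hη γ hγ _ hrootp t₁ ht₁' hval t ht
    linarith
  -- lower bound
  have hlb : ∀ t ∈ Icc (0:ℝ) T, 2 * a - 2 * κ ≤ γ t := by
    rcases le_or_gt (2 * a - δ) 0 with hm | hm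
    · intro t ht
      by_contra hcon
      push_neg at hcon
      have hcon' : γ t < 2 * a - δ := by linarith
      obtain ⟨t₁, ht₁, hval⟩ : ∃ t₁ ∈ Icc t T, γ t₁ = 2 * a - δ := by
        have hsub : Icc (γ t) (γ T) ⊆ γ '' Icc t T :=
          intermediate_value_Icc ht.2 (hcont.mono (Icc_subset_Icc ht.1 le_rfl))
        have hmem : (2 * a - δ) ∈ Icc (γ t) (γ T) := ⟨le_of_lt hcon', by rw [hT0]; linarith⟩
        obtain ⟨t₁, ht₁, heq⟩ := hsub hmem
        exact ⟨t₁, ht₁, heq⟩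
      have ht₁' : t₁ ∈ Icc (0:ℝ) T := ⟨le_trans ht.1 ht₁.1, ht₁.2⟩
      have := riccati_root_rigid a η φ T hη γ hγ _ hrootm t₁ ht₁' hval t ht
      linarith
    · -- 2a - δ > 0 : show γ ≥ 0
      intro t₀ ht₀
      by_contra hcon
      push_neg at hcon
      have hcon' : γ t₀ < 0 := by linarith
      set S : Set ℝ := {t ∈ Icc t₀ T | γ t = 0} with hS
      have hTS : T ∈ S := ⟨⟨ht₀.2, le_rfl⟩, hT0⟩
      have hSclosed : IsClosed S := by
        have : S = Icc t₀ T ∩ γ ⁻¹' {0} := by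
          ext x; simp [hS]
        rw [this]
        exact ContinuousOn.preimage_isClosed_of_isClosed
          (hcont.mono (Icc_subset_Icc ht₀.1 le_rfl)) isClosed_Icc isClosed_singleton
      have hSbdd : BddBelow S := ⟨t₀, fun x hx => hx.1.1⟩
      set t₁ : ℝ := sInf S with ht₁def
      have ht₁S : t₁ ∈ S := hSclosed.csInf_mem ⟨T, hTS⟩ hSbdd
      have ht₁0 : γ t₁ = 0 := ht₁S.2
      have ht₀t₁ : t₀ < t₁ := by
        rcases lt_or_eq_of_le ht₁S.1.1 with h | h
        · exact h
        · exfalso; rw [← h] at ht₁0; linarith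
      have hneg : ∀ t ∈ Ico t₀ t₁, γ t < 0 := by
        intro t ht
        by_contra hge
        push_neg at hge
        rcases lt_or_eq_of_le hge with hgt | heq0
        · obtain ⟨s, hs, hseq⟩ : ∃ s ∈ Icc t₀ t, γ s = 0 := by
            have hsub : Icc (γ t₀) (γ t) ⊆ γ '' Icc t₀ t :=
              intermediate_value_Icc ht.1
                (hcont.mono (Icc_subset_Icc ht₀.1 (le_trans (le_of_lt ht.2) ht₁S.1.2)))
            have hmem : (0:ℝ) ∈ Icc (γ t₀) (γ t) := ⟨le_of_lt hcon', le_of_lt hgt⟩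
            obtain ⟨s, hs, heq⟩ := hsub hmem
            exact ⟨s, hs, heq⟩
          have hsS : s ∈ S := ⟨⟨hs.1, le_trans hs.2 (le_trans (le_of_lt ht.2) ht₁S.1.2)⟩, hseq⟩
          have := csInf_le hSbdd hsS
          have : t₁ ≤ s := this
          linarith [hs.2, ht.2]
        · have htS : t ∈ S := ⟨⟨ht.1, le_trans (le_of_lt ht.2) ht₁S.1.2⟩, heq0.symm⟩
          have := csInf_le hSbdd htS
          linarith [ht.2]
      have hfneg : ∀ y : ℝ, y ≤ 0 →
          (φ - a ^ 2 / η) + (2 * a / η) * y - (1 / (2 * η)) * y ^ 2 ≤ 0 := by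
        intro y hy
        have hfact : (φ - a ^ 2 / η) + (2 * a / η) * y - (1 / (2 * η)) * y ^ 2 =
            -(((y - (2 * a - δ)) * (y - (2 * a + δ))) / (2 * η)) := by
          field_simp
          linear_combination (-1) * hδ2
        rw [hfact]
        have h1 : y - (2 * a - δ) < 0 := by linarith
        have h2 : y - (2 * a + δ) < 0 := by linarith
        have : 0 < (y - (2 * a - δ)) * (y - (2 * a + δ)) := mul_pos_of_neg_of_neg h1 h2
        have : 0 < ((y - (2 * a - δ)) * (y - (2 * a + δ))) / (2 * η) := by positivity
        linarith
      have hanti : AntitoneOn γ (Icc t₀ t₁) := by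
        have hconv : Convex ℝ (Icc t₀ t₁) := convex_Icc _ _
        have hsubT : Icc t₀ t₁ ⊆ Icc 0 T := Icc_subset_Icc ht₀.1 ht₁S.1.2
        have hderivAt : ∀ x ∈ interior (Icc t₀ t₁), HasDerivAt γ
            ((φ - a ^ 2 / η) + (2 * a / η) * γ x - (1 / (2 * η)) * (γ x) ^ 2) x := by
          intro x hx
          rw [interior_Icc] at hx
          have hxT : x ∈ Icc (0:ℝ) T := hsubT ⟨le_of_lt hx.1, le_of_lt hx.2⟩
          have hmem : Icc (0:ℝ) T ∈ nhds x := by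
            apply Icc_mem_nhds
            · linarith [ht₀.1, hx.1]
            · linarith [ht₁S.1.2, hx.2]
          exact (hγ.2.2 x hxT).hasDerivAt hmem
        apply antitoneOn_of_deriv_nonpos hconv (hcont.mono hsubT)
        · intro x hx
          exact ((hderivAt x hx).differentiableAt).differentiableWithinAt
        · intro x hx
          rw [(hderivAt x hx).deriv]
          apply hfneg
          rw [interior_Icc] at hx
          exact le_of_lt (hneg x ⟨le_of_lt hx.1, hx.2⟩)
      have := hanti (left_mem_Icc.mpr (le_of_lt ht₀t₁)) (right_mem_Icc.mpr (le_of_lt ht₀t₁))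
        (le_of_lt ht₀t₁)
      rw [ht₁0] at this
      linarith
  intro t ht
  rw [abs_le]
  constructor
  · linarith [hlb t ht]
  · linarith [hub t ht, hδκ]

lemma integral_linear (c d p q : ℝ) :
    ∫ x in p..q, (c * (x - p) + d) = c * (q - p) ^ 2 / 2 + d * (q - p) := by
  have h1 : (fun x => c * (x - p) + d) = fun x => c * x + (d - c * p) := by
    funext x; ring
  rw [h1, intervalIntegral.integral_add
    (by apply Continuous.intervalIntegrable; exact continuous_const.mul continuous_id')
    intervalIntegrable_const,
    intervalIntegral.integral_const_mul, integral_id, intervalIntegral.integral_const]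
  simp only [smul_eq_mul]
  ring

set_option maxHeartbeats 2000000 in
theorem Lhat_operator_bounds
    (a η φ T : ℝ) (ha : 0 < a) (hη : 0 < η) (hφ : 0 < φ) (hT : 0 < T)
    (γ : ℝ → ℝ) (hγ : IsTraderRiccatiSol a η φ T γ)
    (E : ℝ → ℝ → ℝ) (F : ℝ → ℝ)
    (hE : ContinuousOn (fun p : ℝ × ℝ => E p.1 p.2) (Icc 0 T ×ˢ Icc 0 T))
    (hF : ContinuousOn F (Icc 0 T)) :
    (∀ s ∈ Icc (0 : ℝ) T, ∀ t ∈ Icc (0 : ℝ) T,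
      |Lhat1 (kerA a η γ) (kerB a η γ) T E F s t| ≤
        Real.exp (2 * max a (Real.sqrt (η * φ)) * T / η) *
          ((max a (Real.sqrt (η * φ)) * T ^ 2 / (2 * η ^ 2) + T / (2 * η)) *
              (⨆ p : Icc (0 : ℝ) T × Icc (0 : ℝ) T, |E (p.1 : ℝ) (p.2 : ℝ)|) +
            (max a (Real.sqrt (η * φ)) * T / (2 * η ^ 2)) *
              (⨆ s' : Icc (0 : ℝ) T, |F (s' : ℝ)|))) ∧
    (∀ t ∈ Icc (0 : ℝ) T,
      |Lhat2 (kerB a η γ) T E F t| ≤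
        Real.exp (2 * max a (Real.sqrt (η * φ)) * T / η) *
          ((T ^ 2 / (4 * η)) *
              (⨆ p : Icc (0 : ℝ) T × Icc (0 : ℝ) T, |E (p.1 : ℝ) (p.2 : ℝ)|) +
            (T / (2 * η)) * (⨆ s' : Icc (0 : ℝ) T, |F (s' : ℝ)|))) := by
  have hcont : ContinuousOn γ (Icc 0 T) := hγ.1.continuousOn
  set κ : ℝ := max a (Real.sqrt (η * φ)) with hκdef
  have hκpos : 0 < κ := lt_of_lt_of_le ha (le_max_left _ _)
  have hγb : ∀ t ∈ Icc (0:ℝ) T, |γ t - 2 * a| ≤ 2 * κ := gamma_abs_bound ha hη hφ hT hγ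
  set M : ℝ := Real.exp (κ * T / η) with hMdef
  have hM1 : 1 ≤ M := Real.one_le_exp (by positivity)
  have hMpos : 0 < M := lt_of_lt_of_le one_pos hM1
  have hM2 : Real.exp (2 * κ * T / η) = M * M := by
    rw [hMdef, ← Real.exp_add]
    ring_nf
  -- membership helper
  have hmem : ∀ {x y u : ℝ}, x ∈ Icc (0:ℝ) T → y ∈ Icc (0:ℝ) T → u ∈ uIoc x y → u ∈ Icc (0:ℝ) T :=
    fun hx hy hu => uIcc_subset_Icc hx hy (uIoc_subset_uIcc hu)
  -- integrand of Gam
  set g : ℝ → ℝ := fun r => (γ r - 2 * a) / (2 * η) with hgdef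
  have hgcont : ContinuousOn g (Icc 0 T) := by
    apply (hcont.sub continuousOn_const).div_const
  have hgint : ∀ {x y : ℝ}, x ∈ Icc (0:ℝ) T → y ∈ Icc (0:ℝ) T → IntervalIntegrable g MeasureTheory.volume x y :=
    fun hx hy => (hgcont.mono (uIcc_subset_Icc hx hy)).intervalIntegrable
  have hgbound : ∀ x ∈ Icc (0:ℝ) T, |g x| ≤ κ / η := by
    intro x hx
    rw [hgdef]
    rw [abs_div, abs_of_pos (by linarith : (0:ℝ) < 2 * η)]
    rw [div_le_div_iff₀ (by linarith) hη]
    have := hγb x hx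
    nlinarith
  -- Gam bounds
  have hGam_le : ∀ {x y : ℝ}, x ∈ Icc (0:ℝ) T → y ∈ Icc (0:ℝ) T → Gam a η γ x y ≤ M := by
    intro x y hx hy
    rw [Gam, hMdef, Real.exp_le_exp]
    have h1 : |∫ r in x..y, g r| ≤ (κ / η) * |y - x| := by
      rw [← Real.norm_eq_abs]
      apply intervalIntegral.norm_integral_le_of_norm_le_const
      intro u hu
      rw [Real.norm_eq_abs]
      exact hgbound u (hmem hx hy hu)
    have h2 : |y - x| ≤ T := by
      rw [abs_sub_le_iff]
      constructor <;> linarith [hx.1, hx.2, hy.1, hy.2]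
    have h3 : (∫ r in x..y, g r) ≤ |∫ r in x..y, g r| := le_abs_self _
    calc (∫ r in x..y, (γ r - 2 * a) / (2 * η)) = ∫ r in x..y, g r := rfl
      _ ≤ (κ / η) * |y - x| := le_trans h3 h1
      _ ≤ (κ / η) * T := by
          apply mul_le_mul_of_nonneg_left h2 (by positivity)
      _ = κ * T / η := by ring
  have hGam_mul : ∀ {x y z : ℝ}, x ∈ Icc (0:ℝ) T → y ∈ Icc (0:ℝ) T → z ∈ Icc (0:ℝ) T →
      Gam a η γ x y * Gam a η γ y z = Gam a η γ x z := by
    intro x y z hx hy hz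
    rw [Gam, Gam, Gam, ← Real.exp_add]
    congr 1
    exact intervalIntegral.integral_add_adjacent_intervals (hgint hx hy) (hgint hy hz)
  have hGam_pos : ∀ x y : ℝ, 0 < Gam a η γ x y := fun x y => Real.exp_pos _
  -- kernel bounds
  set CA : ℝ := κ * M / (2 * η ^ 2) with hCAdef
  have hCApos : 0 < CA := by positivity
  have hkerA : ∀ {r x y : ℝ}, r ∈ Icc (0:ℝ) T → x ∈ Icc (0:ℝ) T → y ∈ Icc (0:ℝ) T →
      |kerA a η γ r x y| ≤ CA := by
    intro r x y hr hx hy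
    rw [kerA, mul_assoc, hGam_mul hr hx hy, abs_mul, abs_div,
      abs_of_pos (by positivity : (0:ℝ) < 4 * η ^ 2),
      abs_of_pos (hGam_pos r y)]
    calc |γ y - 2 * a| / (4 * η ^ 2) * Gam a η γ r y
        ≤ (2 * κ) / (4 * η ^ 2) * M := by
          apply mul_le_mul
          · apply div_le_div_of_nonneg_right ?_ (by positivity)
            · exact hγb y hy
          · exact hGam_le hr hy
          · exact le_of_lt (hGam_pos r y)
          · positivity
      _ = CA := by rw [hCAdef]; ring
  have hkerB : ∀ {x y : ℝ}, x ∈ Icc (0:ℝ) T → y ∈ Icc (0:ℝ) T →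
      |kerB a η γ x y| ≤ M / (2 * η) := by
    intro x y hx hy
    rw [kerB, abs_div, abs_of_pos (by linarith : (0:ℝ) < 2 * η),
      abs_of_pos (hGam_pos x y)]
    apply div_le_div_of_nonneg_right (hGam_le hx hy) (by linarith)
  -- sup norms
  haveI : Nonempty (Icc (0:ℝ) T) := ⟨⟨0, ⟨le_rfl, le_of_lt hT⟩⟩⟩
  set NE : ℝ := ⨆ p : Icc (0 : ℝ) T × Icc (0 : ℝ) T, |E (p.1 : ℝ) (p.2 : ℝ)| with hNEdef
  set NF : ℝ := ⨆ s' : Icc (0 : ℝ) T, |F (s' : ℝ)| with hNFdef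
  obtain ⟨CE, hCE⟩ := ((isCompact_Icc (a := (0:ℝ)) (b := T)).prod isCompact_Icc).exists_bound_of_continuousOn hE
  have hEbdd : BddAbove (range fun p : Icc (0 : ℝ) T × Icc (0 : ℝ) T => |E (p.1 : ℝ) (p.2 : ℝ)|) := by
    refine ⟨CE, ?_⟩
    rintro x ⟨p, rfl⟩
    exact hCE (p.1, p.2) ⟨p.1.2, p.2.2⟩
  have hNE : ∀ {x y : ℝ}, x ∈ Icc (0:ℝ) T → y ∈ Icc (0:ℝ) T → |E x y| ≤ NE := by
    intro x y hx hy
    exact le_ciSup hEbdd (⟨⟨x, hx⟩, ⟨y, hy⟩⟩ : Icc (0 : ℝ) T × Icc (0 : ℝ) T)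
  have hNE0 : 0 ≤ NE := le_trans (abs_nonneg _) (hNE ⟨le_rfl, le_of_lt hT⟩ ⟨le_rfl, le_of_lt hT⟩)
  obtain ⟨CF, hCF⟩ := (isCompact_Icc (a := (0:ℝ)) (b := T)).exists_bound_of_continuousOn hF
  have hFbdd : BddAbove (range fun s' : Icc (0 : ℝ) T => |F (s' : ℝ)|) := by
    refine ⟨CF, ?_⟩
    rintro x ⟨p, rfl⟩
    exact hCF p p.2
  have hNF : ∀ {x : ℝ}, x ∈ Icc (0:ℝ) T → |F x| ≤ NF := by
    intro x hx
    exact le_ciSup hFbdd (⟨x, hx⟩ : Icc (0 : ℝ) T)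
  have hNF0 : 0 ≤ NF := le_trans (abs_nonneg _) (hNF ⟨le_rfl, le_of_lt hT⟩)
  constructor
  · -- Lhat1
    intro s hs t ht
    -- term 1
    have hterm1 : |∫ u in s..t, ∫ r in u..T, kerA a η γ r u t * E s r| ≤ CA * NE * T ^ 2 / 2 := by
      have hinner : ∀ u ∈ uIoc s t, ‖∫ r in u..T, kerA a η γ r u t * E s r‖ ≤ CA * NE * (T - u) := by
        intro u hu
        have huT : u ∈ Icc (0:ℝ) T := hmem hs ht hu
        have h1 : ‖∫ r in u..T, kerA a η γ r u t * E s r‖ ≤ (CA * NE) * |T - u| := by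
          apply intervalIntegral.norm_integral_le_of_norm_le_const
          intro r hr
          have hrT : r ∈ Icc (0:ℝ) T := hmem huT ⟨le_of_lt hT, le_rfl⟩ hr
          rw [Real.norm_eq_abs, abs_mul]
          exact mul_le_mul (hkerA hrT huT ht) (hNE hs hrT) (abs_nonneg _) (le_of_lt hCApos)
        rwa [abs_of_nonneg (by linarith [huT.2] : (0:ℝ) ≤ T - u)] at h1
      have h2 : ‖∫ u in s..t, ∫ r in u..T, kerA a η γ r u t * E s r‖ ≤
          |∫ u in s..t, CA * NE * (T - u)| := by
        apply intervalIntegral.norm_integral_le_abs_of_norm_le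
        · exact (MeasureTheory.ae_restrict_mem measurableSet_uIoc).mono hinner
        · exact ((continuous_const.mul (continuous_const.sub continuous_id)).intervalIntegrable s t)
      have h3 : (∫ u in s..t, CA * NE * (T - u)) =
          CA * NE * ((T - s) ^ 2 - (T - t) ^ 2) / 2 := by
        rw [intervalIntegral.integral_const_mul,
          intervalIntegral.integral_sub (intervalIntegrable_const) intervalIntegral.intervalIntegrable_id,
          intervalIntegral.integral_const, integral_id]
        simp only [smul_eq_mul]
        ring
      rw [Real.norm_eq_abs] at h2
      refine le_trans h2 ?_
      rw [h3, abs_div, abs_mul, abs_of_nonneg (by positivity : (0:ℝ) ≤ CA * NE),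
        abs_of_pos (by norm_num : (0:ℝ) < 2)]
      have hX : |(T - s) ^ 2 - (T - t) ^ 2| ≤ T ^ 2 := by
        rw [abs_sub_le_iff]
        constructor <;> nlinarith [hs.1, hs.2, ht.1, ht.2]
      gcongr
    -- term 2
    have hterm2 : |∫ r in s..T, kerA a η γ r s t * ((∫ u in s..r, E u r) + F r)| ≤
        CA * (NE * T ^ 2 / 2 + NF * T) := by
      have hTmem : T ∈ Icc (0:ℝ) T := ⟨le_of_lt hT, le_rfl⟩
      have hptw : ∀ r ∈ uIoc s T, ‖kerA a η γ r s t * ((∫ u in s..r, E u r) + F r)‖ ≤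
          CA * NE * (r - s) + CA * NF := by
        intro r hr
        have hrT : r ∈ Icc (0:ℝ) T := hmem hs hTmem hr
        have hrs : s ≤ r := by
          have : r ∈ Ioc s T := by
            rwa [uIoc_of_le hs.2] at hr
          exact le_of_lt this.1
        have hE1 : |∫ u in s..r, E u r| ≤ NE * (r - s) := by
          have := intervalIntegral.norm_integral_le_of_norm_le_const
            (f := fun u => E u r) (a := s) (b := r) (C := NE) (fun u hu => by
              rw [Real.norm_eq_abs]
              exact hNE (hmem hs hrT hu) hrT)
          rw [Real.norm_eq_abs, abs_of_nonneg (by linarith : (0:ℝ) ≤ r - s)] at this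
          linarith [this]
        have hF1 : |F r| ≤ NF := hNF hrT
        rw [Real.norm_eq_abs, abs_mul]
        calc |kerA a η γ r s t| * |(∫ u in s..r, E u r) + F r|
            ≤ CA * (NE * (r - s) + NF) := by
              apply mul_le_mul (hkerA hrT hs ht) ?_ (abs_nonneg _) (le_of_lt hCApos)
              calc |(∫ u in s..r, E u r) + F r| ≤ |∫ u in s..r, E u r| + |F r| := abs_add_le _ _
                _ ≤ NE * (r - s) + NF := add_le_add hE1 hF1
          _ = CA * NE * (r - s) + CA * NF := by ring
      have h2 : ‖∫ r in s..T, kerA a η γ r s t * ((∫ u in s..r, E u r) + F r)‖ ≤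
          |∫ r in s..T, (CA * NE * (r - s) + CA * NF)| := by
        apply intervalIntegral.norm_integral_le_abs_of_norm_le
        · exact (MeasureTheory.ae_restrict_mem measurableSet_uIoc).mono hptw
        · exact (((continuous_const.mul
            (continuous_id.sub continuous_const)).add continuous_const).intervalIntegrable _ _)
      have h3 : (∫ r in s..T, (CA * NE * (r - s) + CA * NF)) =
          CA * NE * (T - s) ^ 2 / 2 + CA * NF * (T - s) := integral_linear _ _ _ _
      rw [Real.norm_eq_abs] at h2
      refine le_trans h2 ?_
      rw [h3]
      have hval : (0:ℝ) ≤ CA * NE * (T - s) ^ 2 / 2 + CA * NF * (T - s) := by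
        have h1 : (0:ℝ) ≤ T - s := by linarith [hs.2]
        positivity
      rw [abs_of_nonneg hval]
      have h5 : (T - s) ^ 2 ≤ T ^ 2 := by nlinarith [hs.1, hs.2]
      have h6 : T - s ≤ T := by linarith [hs.1]
      have hA := mul_le_mul_of_nonneg_left h5 (by positivity : (0:ℝ) ≤ CA * NE / 2)
      have hB := mul_le_mul_of_nonneg_left h6 (by positivity : (0:ℝ) ≤ CA * NF)
      calc CA * NE * (T - s) ^ 2 / 2 + CA * NF * (T - s)
          = CA * NE / 2 * (T - s) ^ 2 + CA * NF * (T - s) := by ring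
        _ ≤ CA * NE / 2 * T ^ 2 + CA * NF * T := by linarith
        _ = CA * (NE * T ^ 2 / 2 + NF * T) := by ring
    -- term 3
    have hterm3 : |∫ u in t..T, kerB a η γ u t * E s u| ≤ M / (2 * η) * NE * T := by
      have hTmem : T ∈ Icc (0:ℝ) T := ⟨le_of_lt hT, le_rfl⟩
      have h1 : ‖∫ u in t..T, kerB a η γ u t * E s u‖ ≤ (M / (2 * η) * NE) * |T - t| := by
        apply intervalIntegral.norm_integral_le_of_norm_le_const
        intro u hu
        have huT : u ∈ Icc (0:ℝ) T := hmem ht hTmem hu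
        rw [Real.norm_eq_abs, abs_mul]
        exact mul_le_mul (hkerB huT ht) (hNE hs huT) (abs_nonneg _) (by positivity)
      rw [Real.norm_eq_abs, abs_of_nonneg (by linarith [ht.1, ht.2] : (0:ℝ) ≤ T - t)] at h1
      calc |∫ u in t..T, kerB a η γ u t * E s u| ≤ (M / (2 * η) * NE) * (T - t) := h1
        _ ≤ M / (2 * η) * NE * T := by
            apply mul_le_mul_of_nonneg_left (by linarith [ht.1]) (by positivity)
    -- combine
    rw [Lhat1, hM2]
    calc |(∫ u in s..t, ∫ r in u..T, kerA a η γ r u t * E s r) +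
          (∫ r in s..T, kerA a η γ r s t * ((∫ u in s..r, E u r) + F r)) +
          ∫ u in t..T, kerB a η γ u t * E s u|
        ≤ CA * NE * T ^ 2 / 2 + CA * (NE * T ^ 2 / 2 + NF * T) + M / (2 * η) * NE * T := by
          calc |(∫ u in s..t, ∫ r in u..T, kerA a η γ r u t * E s r) +
              (∫ r in s..T, kerA a η γ r s t * ((∫ u in s..r, E u r) + F r)) +
              ∫ u in t..T, kerB a η γ u t * E s u|
              ≤ |(∫ u in s..t, ∫ r in u..T, kerA a η γ r u t * E s r) +
                (∫ r in s..T, kerA a η γ r s t * ((∫ u in s..r, E u r) + F r))| +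
                |∫ u in t..T, kerB a η γ u t * E s u| := abs_add_le _ _
            _ ≤ |∫ u in s..t, ∫ r in u..T, kerA a η γ r u t * E s r| +
                |∫ r in s..T, kerA a η γ r s t * ((∫ u in s..r, E u r) + F r)| +
                |∫ u in t..T, kerB a η γ u t * E s u| := by
                  have := abs_add_le (∫ u in s..t, ∫ r in u..T, kerA a η γ r u t * E s r)
                    (∫ r in s..T, kerA a η γ r s t * ((∫ u in s..r, E u r) + F r))
                  linarith
            _ ≤ CA * NE * T ^ 2 / 2 + CA * (NE * T ^ 2 / 2 + NF * T) + M / (2 * η) * NE * T := by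
                  linarith [hterm1, hterm2, hterm3]
      _ = M * ((κ * T ^ 2 / (2 * η ^ 2) + T / (2 * η)) * NE + κ * T / (2 * η ^ 2) * NF) := by
          rw [hCAdef]; ring
      _ ≤ M * M * ((κ * T ^ 2 / (2 * η ^ 2) + T / (2 * η)) * NE + κ * T / (2 * η ^ 2) * NF) := by
          have hbr : 0 ≤ (κ * T ^ 2 / (2 * η ^ 2) + T / (2 * η)) * NE + κ * T / (2 * η ^ 2) * NF := by
            positivity
          have h1M : M ≤ M * M := by nlinarith [hM1, hMpos]
          exact mul_le_mul_of_nonneg_right h1M hbr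
  · -- Lhat2
    intro t ht
    have hTmem : T ∈ Icc (0:ℝ) T := ⟨le_of_lt hT, le_rfl⟩
    have hptw : ∀ x ∈ uIoc t T, ‖kerB a η γ x t * ((∫ u in t..x, E u x) + F x)‖ ≤
        M / (2 * η) * NE * (x - t) + M / (2 * η) * NF := by
      intro x hx
      have hxT : x ∈ Icc (0:ℝ) T := hmem ht hTmem hx
      have hxt : t ≤ x := by
        have : x ∈ Ioc t T := by rwa [uIoc_of_le ht.2] at hx
        exact le_of_lt this.1
      have hE1 : |∫ u in t..x, E u x| ≤ NE * (x - t) := by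
        have := intervalIntegral.norm_integral_le_of_norm_le_const
          (f := fun u => E u x) (a := t) (b := x) (C := NE) (fun u hu => by
            rw [Real.norm_eq_abs]
            exact hNE (hmem ht hxT hu) hxT)
        rw [Real.norm_eq_abs, abs_of_nonneg (by linarith : (0:ℝ) ≤ x - t)] at this
        linarith [this]
      rw [Real.norm_eq_abs, abs_mul]
      calc |kerB a η γ x t| * |(∫ u in t..x, E u x) + F x|
          ≤ M / (2 * η) * (NE * (x - t) + NF) := by
            apply mul_le_mul (hkerB hxT ht) ?_ (abs_nonneg _) (by positivity)
            calc |(∫ u in t..x, E u x) + F x| ≤ |∫ u in t..x, E u x| + |F x| := abs_add_le _ _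
              _ ≤ NE * (x - t) + NF := add_le_add hE1 (hNF hxT)
        _ = M / (2 * η) * NE * (x - t) + M / (2 * η) * NF := by ring
    have h2 : ‖∫ x in t..T, kerB a η γ x t * ((∫ u in t..x, E u x) + F x)‖ ≤
        |∫ x in t..T, (M / (2 * η) * NE * (x - t) + M / (2 * η) * NF)| := by
      apply intervalIntegral.norm_integral_le_abs_of_norm_le
      · exact (MeasureTheory.ae_restrict_mem measurableSet_uIoc).mono hptw
      · exact (((continuous_const.mul
          (continuous_id.sub continuous_const)).add continuous_const).intervalIntegrable _ _)
    have h3 : (∫ x in t..T, (M / (2 * η) * NE * (x - t) + M / (2 * η) * NF)) =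
        M / (2 * η) * NE * (T - t) ^ 2 / 2 + M / (2 * η) * NF * (T - t) :=
      integral_linear _ _ _ _
    rw [Lhat2, hM2]
    rw [Real.norm_eq_abs] at h2
    refine le_trans h2 ?_
    rw [h3]
    have hval : (0:ℝ) ≤ M / (2 * η) * NE * (T - t) ^ 2 / 2 + M / (2 * η) * NF * (T - t) := by
      have h1 : (0:ℝ) ≤ T - t := by linarith [ht.2]
      positivity
    rw [abs_of_nonneg hval]
    have h5 : (T - t) ^ 2 ≤ T ^ 2 := by nlinarith [ht.1, ht.2]
    have h6 : T - t ≤ T := by linarith [ht.1]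
    have h4 : M / (2 * η) * NE * (T - t) ^ 2 / 2 + M / (2 * η) * NF * (T - t) ≤
        M * (T ^ 2 / (4 * η) * NE + T / (2 * η) * NF) := by
      have hA := mul_le_mul_of_nonneg_left h5 (by positivity : (0:ℝ) ≤ M / (2 * η) * NE / 2)
      have hB := mul_le_mul_of_nonneg_left h6 (by positivity : (0:ℝ) ≤ M / (2 * η) * NF)
      have heq : M / (2 * η) * NE / 2 * T ^ 2 + M / (2 * η) * NF * T =
          M * (T ^ 2 / (4 * η) * NE + T / (2 * η) * NF) := by
        field_simp
        ring
      calc M / (2 * η) * NE * (T - t) ^ 2 / 2 + M / (2 * η) * NF * (T - t)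
          = M / (2 * η) * NE / 2 * (T - t) ^ 2 + M / (2 * η) * NF * (T - t) := by ring
        _ ≤ M / (2 * η) * NE / 2 * T ^ 2 + M / (2 * η) * NF * T := by linarith
        _ = M * (T ^ 2 / (4 * η) * NE + T / (2 * η) * NF) := heq
    refine le_trans h4 ?_
    have hbr : 0 ≤ T ^ 2 / (4 * η) * NE + T / (2 * η) * NF := by positivity
    have h1M : M ≤ M * M := by nlinarith [hM1, hMpos]
    exact mul_le_mul_of_nonneg_right h1M hbr
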